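/- If x, y are elements of a complex Lie algebra with [x,y] = λy, λ ∈ ℂ, then for constants a₀, b₀ > 0 the time-dependent Hermitian tensor f(t) = a₀ x⊗x̄ + b₀ e^{|λ|² a₀ t} y⊗ȳ solves the ODE ∂_t f = f#. -/

import Mathlib

open scoped BigOperators ComplexConjugate

/-- The coordinate form of the `#` operation on `Sym^{1,1}(g)` for a complex Lie algebra
`g` (Hermitian elements of `g ⊗ ḡ` being recorded by their coefficient matrices `h^{αβ}`
in a chosen basis): `(h#k)^{αβ} = c^α_{εδ} conj(c^β_{γθ}) h^{εγ} k^{δθ}`, where `c` are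
the structure constants.  On pure tensors this is
`(v₁ ⊗ v̄₂) # (w₁ ⊗ w̄₂) = ⁅v₁, w₁⁆ ⊗ conj ⁅v₂, w₂⁆`. -/
noncomputable def sharpMatC {ι : Type*} [Fintype ι] (c : ι → ι → ι → ℂ) (h k : ι → ι → ℂ) : ι → ι → ℂ :=
  fun α β => ∑ ε, ∑ δ, ∑ γ, ∑ θ, c ε δ α * conj (c γ θ β) * h ε γ * k δ θ

/-- The quadratic square `h# = (1/2) h # h`. -/
noncomputable def sharpSqC {ι : Type*} [Fintype ι] (c : ι → ι → ι → ℂ) (h : ι → ι → ℂ) :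
    ι → ι → ℂ :=
  fun α β => (1 / 2 : ℂ) * sharpMatC c h h α β

/-- Evaluation of a Hermitian form `h ∈ Sym^{1,1}(g)` on a functional `ξ ∈ g*`
(given by coordinates): `h(ξ, ξ̄) = Σ ξ_α conj(ξ_β) h^{αβ}`. -/
noncomputable def quadC {ι : Type*} [Fintype ι] (h : ι → ι → ℂ) (ξ : ι → ℂ) : ℂ :=
  ∑ α, ∑ β, ξ α * conj (ξ β) * h α β

/-- A coefficient matrix is Hermitian. -/
def HermMatC {ι : Type*} (h : ι → ι → ℂ) : Prop := ∀ α β, h α β = conj (h β α)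

/-- Positive semidefiniteness of a Hermitian form on `g*`. -/
def PosSemidefC {ι : Type*} [Fintype ι] (h : ι → ι → ℂ) : Prop :=
  ∀ ξ : ι → ℂ, 0 ≤ (quadC h ξ).re

/-- Positive definiteness of a Hermitian form on `g*`. -/
def PosDefC {ι : Type*} [Fintype ι] (h : ι → ι → ℂ) : Prop :=
  ∀ ξ : ι → ℂ, ξ ≠ 0 → 0 < (quadC h ξ).re

/-- Structure constants of a complex Lie algebra relative to a basis. -/
noncomputable def structConstC {ι : Type*} [Fintype ι] (L : Type*) [LieRing L] [LieAlgebra ℂ L]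
    (b : Module.Basis ι ℂ L) : ι → ι → ι → ℂ :=
  fun i j k => b.repr ⁅b i, b j⁆ k

/-!
Since `#` is bilinear and `(v₁ ⊗ v̄₂) # (w₁ ⊗ w̄₂) = ⁅v₁, w₁⁆ ⊗ conj ⁅v₂, w₂⁆`, for
`f = a x ⊗ x̄ + p y ⊗ ȳ` the diagonal terms vanish (`⁅x, x⁆ = ⁅y, y⁆ = 0`) and both mixed terms
equal `|λ|² y ⊗ ȳ`, so `f# = a p |λ|² y ⊗ ȳ`. For `a = a₀` and `p(t) = b₀ e^{|λ|² a₀ t}` this is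
`p'(t) y ⊗ ȳ = ∂ₜ f`.
-/

section Sharp

variable {ι : Type*} [Fintype ι] (c : ι → ι → ι → ℂ) (h h' k k' : ι → ι → ℂ) (r : ℂ)

theorem sharpMatC_add_left : sharpMatC c (h + h') k = sharpMatC c h k + sharpMatC c h' k := by
  ext α β
  simp only [sharpMatC, Pi.add_apply, mul_add, add_mul, Finset.sum_add_distrib]

theorem sharpMatC_add_right : sharpMatC c h (k + k') = sharpMatC c h k + sharpMatC c h k' := by
  ext α β
  simp only [sharpMatC, Pi.add_apply, mul_add, Finset.sum_add_distrib]

theorem sharpMatC_smul_left : sharpMatC c (r • h) k = r • sharpMatC c h k := by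
  ext α β
  simp only [sharpMatC, Pi.smul_apply, smul_eq_mul, Finset.mul_sum]
  exact Finset.sum_congr rfl fun _ _ => Finset.sum_congr rfl fun _ _ =>
    Finset.sum_congr rfl fun _ _ => Finset.sum_congr rfl fun _ _ => by ring

theorem sharpMatC_smul_right : sharpMatC c h (r • k) = r • sharpMatC c h k := by
  ext α β
  simp only [sharpMatC, Pi.smul_apply, smul_eq_mul, Finset.mul_sum]
  exact Finset.sum_congr rfl fun _ _ => Finset.sum_congr rfl fun _ _ =>
    Finset.sum_congr rfl fun _ _ => Finset.sum_congr rfl fun _ _ => by ring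

end Sharp

section PureTensor

variable {ι : Type*} {L : Type*} [LieRing L] [LieAlgebra ℂ L] (b : Module.Basis ι ℂ L)

/-- The coefficient matrix of `v ⊗ w̄` in the basis `b`. -/
noncomputable def tensorConj (v w : L) : ι → ι → ℂ :=
  fun α β => b.repr v α * conj (b.repr w β)

theorem tensorConj_zero : tensorConj b 0 0 = 0 := by
  ext α β
  simp [tensorConj]

theorem tensorConj_neg (v w : L) : tensorConj b (-v) (-w) = tensorConj b v w := by
  ext α β
  simp [tensorConj]

theorem tensorConj_smul (r : ℂ) (v w : L) :
    tensorConj b (r • v) (r • w) = (r * conj r) • tensorConj b v w := by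
  ext α β
  simp only [tensorConj, map_smul, Finsupp.smul_apply, smul_eq_mul, map_mul, Pi.smul_apply]
  ring

variable [Fintype ι]

theorem sum_structConstC_mul_repr_mul_repr (v w : L) (α : ι) :
    ∑ ε, ∑ δ, structConstC L b ε δ α * b.repr v ε * b.repr w δ = b.repr ⁅v, w⁆ α := by
  conv_rhs => rw [← b.sum_repr v, ← b.sum_repr w]
  simp only [sum_lie, lie_sum, smul_lie, lie_smul, map_sum, map_smul, Finsupp.coe_finsetSum,
    Finset.sum_apply, Finsupp.smul_apply, smul_eq_mul, structConstC, Finset.mul_sum]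
  rw [Finset.sum_comm]
  exact Finset.sum_congr rfl fun _ _ => Finset.sum_congr rfl fun _ _ => by ring

theorem sharpMatC_tensorConj (v₁ v₂ w₁ w₂ : L) :
    sharpMatC (structConstC L b) (tensorConj b v₁ v₂) (tensorConj b w₁ w₂) =
      tensorConj b ⁅v₁, w₁⁆ ⁅v₂, w₂⁆ := by
  ext α β
  simp only [tensorConj, ← sum_structConstC_mul_repr_mul_repr, map_sum, map_mul,
    Finset.sum_mul_sum, sharpMatC]
  refine Finset.sum_congr rfl fun _ _ => ?_
  rw [Finset.sum_comm]
  exact Finset.sum_congr rfl fun _ _ => Finset.sum_congr rfl fun _ _ =>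
    Finset.sum_congr rfl fun _ _ => by ring

theorem sharpSqC_smul_tensorConj_add_smul_tensorConj {x y : L} {lam : ℂ}
    (hxy : ⁅x, y⁆ = lam • y) (a p : ℂ) :
    sharpSqC (structConstC L b) (a • tensorConj b x x + p • tensorConj b y y) =
      (a * p * (lam * conj lam)) • tensorConj b y y := by
  have hyx : ⁅y, x⁆ = -(lam • y) := by rw [← lie_skew, hxy]
  ext α β
  simp only [sharpSqC, sharpMatC_add_left, sharpMatC_add_right, sharpMatC_smul_left,
    sharpMatC_smul_right, sharpMatC_tensorConj, lie_self, hxy, hyx, tensorConj_zero,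
    tensorConj_neg, tensorConj_smul, Pi.add_apply, Pi.smul_apply, Pi.zero_apply, smul_eq_mul]
  ring

theorem sharpSqC_of_lie_eq_smul {x y : L} {lam : ℂ} (hxy : ⁅x, y⁆ = lam • y) (a p : ℂ) :
    sharpSqC (structConstC L b)
        (fun α β => a * b.repr x α * conj (b.repr x β) + p * b.repr y α * conj (b.repr y β)) =
      fun α β => a * p * (lam * conj lam) * b.repr y α * conj (b.repr y β) := by
  have hf : (fun α β => a * b.repr x α * conj (b.repr x β) + p * b.repr y α * conj (b.repr y β)) =
      a • tensorConj b x x + p • tensorConj b y y := by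
    ext α β
    simp only [tensorConj, Pi.add_apply, Pi.smul_apply, smul_eq_mul]
    ring
  rw [hf, sharpSqC_smul_tensorConj_add_smul_tensorConj b hxy]
  ext α β
  simp only [tensorConj, Pi.smul_apply, smul_eq_mul]
  ring

end PureTensor

theorem explicit_subsolution_solves_ODE_general {ι : Type*} [Fintype ι] (L : Type*)
    [LieRing L] [LieAlgebra ℂ L] (b : Module.Basis ι ℂ L)
    (x y : L) (lam : ℂ) (hxy : ⁅x, y⁆ = lam • y)
    (a₀ b₀ : ℝ) :
    ∀ t : ℝ, HasDerivAt
      (fun s : ℝ => (fun α β =>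
        (a₀ : ℂ) * b.repr x α * conj (b.repr x β) +
          (b₀ : ℂ) * Real.exp (‖lam‖ ^ 2 * a₀ * s) *
            b.repr y α * conj (b.repr y β) : ι → ι → ℂ))
      (sharpSqC (structConstC L b) (fun α β =>
        (a₀ : ℂ) * b.repr x α * conj (b.repr x β) +
          (b₀ : ℂ) * Real.exp (‖lam‖ ^ 2 * a₀ * t) *
            b.repr y α * conj (b.repr y β)))
      t := by
  intro t
  rw [sharpSqC_of_lie_eq_smul b hxy]
  refine hasDerivAt_pi.2 fun α => hasDerivAt_pi.2 fun β => ?_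
  have hp : HasDerivAt (fun s : ℝ => (b₀ : ℂ) * Real.exp (‖lam‖ ^ 2 * a₀ * s))
      ((b₀ : ℂ) * (Real.exp (‖lam‖ ^ 2 * a₀ * t) * (‖lam‖ ^ 2 * a₀) : ℝ)) t :=
    (((hasDerivAt_id t).const_mul _).exp.congr_deriv (by simp)).ofReal_comp.const_mul _
  refine (((hp.mul_const _).mul_const _).const_add _).congr_deriv ?_
  rw [Complex.mul_conj']
  push_cast
  ring

/-- if `x, y` are elements of a complex Lie algebra with `⁅x, y⁆ = λ y`,
then for constants `a₀, b₀ > 0` the time-dependent Hermitian tensor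
`f(t) = a₀ x ⊗ x̄ + b₀ e^{|λ|² a₀ t} y ⊗ ȳ` (written in coordinates with respect to a
basis `b`) solves the ODE `∂ₜ f = f#`. -/
theorem explicit_subsolution_solves_ODE {ι : Type*} [Fintype ι] (L : Type*)
    [LieRing L] [LieAlgebra ℂ L] (b : Module.Basis ι ℂ L)
    (x y : L) (lam : ℂ) (hxy : ⁅x, y⁆ = lam • y)
    (a₀ b₀ : ℝ) (ha₀ : 0 < a₀) (hb₀ : 0 < b₀) :
    ∀ t : ℝ, HasDerivAt
      (fun s : ℝ => (fun α β =>
        (a₀ : ℂ) * b.repr x α * conj (b.repr x β) +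
          (b₀ : ℂ) * Real.exp (‖lam‖ ^ 2 * a₀ * s) *
            b.repr y α * conj (b.repr y β) : ι → ι → ℂ))
      (sharpSqC (structConstC L b) (fun α β =>
        (a₀ : ℂ) * b.repr x α * conj (b.repr x β) +
          (b₀ : ℂ) * Real.exp (‖lam‖ ^ 2 * a₀ * t) *
            b.repr y α * conj (b.repr y β)))
      t :=
  explicit_subsolution_solves_ODE_general L b x y lam hxy a₀ b₀
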